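/- Let (Y_i)_{i≥1} be i.i.d. positive-integer-valued random variables, S_k = Σ_{i=1}^k Y_i, and N(L) = #{k ≥ 1 : S_k ≤ L} for an integer L ≥ 1. Suppose q := P(Y₁ > L) satisfies q ≥ A/√L for some A > 0, and let k > 0 be a real number with k√L ≥ 1. Then E(N(L)² · 1{N(L) > k√L}) ≤ 2e·(k + 1/A)²·e^(−Ak)·L. -/

import Mathlib

open MeasureTheory ProbabilityTheory Real

noncomputable section

/-- `N(L)`: the number of renewal epochs `S_k = Y_1 + ⋯ + Y_k`, `k ≥ 1`, lying in
`{1, …, L}` (indices relabelled from 0). -/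
def renEpochs {Ω : Type} (Y : ℕ → Ω → ℕ) (L : ℕ) (ω : Ω) : ℕ :=
  Set.ncard {k : ℕ | 1 ≤ k ∧ ∑ i ∈ Finset.range k, Y i ω ≤ L}

private lemma aux_le_sum {Ω : Type} (Y : ℕ → Ω → ℕ) (hpos : ∀ i ω, 1 ≤ Y i ω)
    (n : ℕ) (ω : Ω) : n ≤ ∑ i ∈ Finset.range n, Y i ω := by
  calc n = ∑ _i ∈ Finset.range n, 1 := by simp
  _ ≤ _ := Finset.sum_le_sum fun i _ => hpos i ω

private lemma aux_ge_iff {Ω : Type} (Y : ℕ → Ω → ℕ) (hpos : ∀ i ω, 1 ≤ Y i ω)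
    (L n : ℕ) (hn : 1 ≤ n) (ω : Ω) :
    n ≤ renEpochs Y L ω ↔ ∑ i ∈ Finset.range n, Y i ω ≤ L := by
  have hmono : ∀ a b : ℕ, a ≤ b →
      ∑ i ∈ Finset.range a, Y i ω ≤ ∑ i ∈ Finset.range b, Y i ω := fun a b hab =>
    Finset.sum_le_sum_of_subset (Finset.range_subset_range.2 hab)
  have hset : {j : ℕ | 1 ≤ j ∧ ∑ i ∈ Finset.range j, Y i ω ≤ L} =
      ↑((Finset.Icc 1 L).filter fun j => ∑ i ∈ Finset.range j, Y i ω ≤ L) := by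
    ext j
    simp only [Set.mem_setOf_eq, Finset.coe_filter, Finset.mem_Icc]
    constructor
    · rintro ⟨h1, h2⟩
      exact ⟨⟨h1, le_trans (aux_le_sum Y hpos j ω) h2⟩, h2⟩
    · rintro ⟨⟨h1, _⟩, h2⟩; exact ⟨h1, h2⟩
  rw [renEpochs, hset, Set.ncard_coe_finset]
  constructor
  · intro h
    by_contra hS
    push_neg at hS
    have hsub : (Finset.Icc 1 L).filter (fun j => ∑ i ∈ Finset.range j, Y i ω ≤ L)
        ⊆ Finset.Icc 1 (n - 1) := by
      intro j hj
      simp only [Finset.mem_filter, Finset.mem_Icc] at hj ⊢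
      refine ⟨hj.1.1, ?_⟩
      by_contra hjn
      push_neg at hjn
      have : n ≤ j := by omega
      exact absurd (le_trans (hmono n j this) hj.2) (not_le.2 hS)
    have := (Finset.card_le_card hsub).trans_eq (Nat.card_Icc 1 (n - 1))
    omega
  · intro hS
    have hsub : Finset.Icc 1 n ⊆
        (Finset.Icc 1 L).filter (fun j => ∑ i ∈ Finset.range j, Y i ω ≤ L) := by
      intro j hj
      simp only [Finset.mem_Icc] at hj
      have hjS : ∑ i ∈ Finset.range j, Y i ω ≤ L := le_trans (hmono j n hj.2) hS
      simp only [Finset.mem_filter, Finset.mem_Icc]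
      exact ⟨⟨hj.1, le_trans (aux_le_sum Y hpos j ω) hjS⟩, hjS⟩
    have := Finset.card_le_card hsub
    rwa [Nat.card_Icc 1 n, Nat.add_sub_cancel] at this

private lemma aux_le_L {Ω : Type} (Y : ℕ → Ω → ℕ) (hpos : ∀ i ω, 1 ≤ Y i ω)
    (L : ℕ) (ω : Ω) : renEpochs Y L ω ≤ L := by
  by_contra h
  push_neg at h
  have := (aux_ge_iff Y hpos L (L + 1) (by omega) ω).1 h
  have := aux_le_sum Y hpos (L + 1) ω
  omega

private lemma aux_sum_w (n₀ : ℕ) : ∀ m : ℕ, n₀ ≤ m →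
    ∑ n ∈ Finset.Icc n₀ m, (if n = n₀ then ((n₀ : ℝ)) ^ 2 else 2 * n - 1) = (m : ℝ) ^ 2 := by
  intro m
  induction m with
  | zero => intro h; interval_cases n₀; simp
  | succ m ih =>
    intro h
    rcases Nat.lt_or_ge m n₀ with hm | hm
    · have : n₀ = m + 1 := by omega
      subst this
      simp
    · rw [Finset.sum_Icc_succ_top (by omega), ih hm, if_neg (by omega)]
      push_cast; ring

private lemma aux_indep {Ω : Type} [MeasurableSpace Ω] (μ : Measure Ω)
    [IsProbabilityMeasure μ] (Y : ℕ → Ω → ℕ) (hmeas : ∀ i, Measurable (Y i))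
    (hindep : iIndepFun Y μ)
    (hident : ∀ i, MeasureTheory.Measure.map (Y i) μ = MeasureTheory.Measure.map (Y 0) μ)
    (L n : ℕ) :
    μ {ω | ∑ i ∈ Finset.range n, Y i ω ≤ L} ≤ (μ {ω | Y 0 ω ≤ L}) ^ n := by
  have hsub : {ω | ∑ i ∈ Finset.range n, Y i ω ≤ L} ⊆
      ⋂ i ∈ Finset.range n, (Y i) ⁻¹' (Set.Iic L) := by
    intro ω hω
    simp only [Set.mem_iInter, Set.mem_preimage, Set.mem_Iic]
    intro i hi
    exact le_trans (Finset.single_le_sum (f := fun i => Y i ω) (fun _ _ => Nat.zero_le _) hi) hω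
  refine le_trans (measure_mono hsub) ?_
  rw [hindep.meas_biInter (S := Finset.range n) (s := fun i => (Y i) ⁻¹' (Set.Iic L))
    (fun i _ => ⟨Set.Iic L, measurableSet_Iic, rfl⟩)]
  have heach : ∀ i, μ ((Y i) ⁻¹' (Set.Iic L)) = μ {ω | Y 0 ω ≤ L} := by
    intro i
    have h1 : μ ((Y i) ⁻¹' (Set.Iic L)) = (Measure.map (Y i) μ) (Set.Iic L) := by
      rw [Measure.map_apply (hmeas i) measurableSet_Iic]
    rw [h1, hident i, Measure.map_apply (hmeas 0) measurableSet_Iic]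
    rfl
  rw [Finset.prod_congr rfl fun i _ => heach i, Finset.prod_const, Finset.card_range]

set_option maxHeartbeats 1000000

/-- **Truncated second-moment bound.** If `(Y_i)` are i.i.d. positive-integer-valued
inter-arrival times with `q = P(Y₁ > L) ≥ A/√L`, and `k > 0` satisfies `k√L ≥ 1`, then
`E(N(L)² 1{N(L) > k√L}) ≤ 2e (k + 1/A)² e^(-Ak) L`. -/
theorem renewal_count_truncated_second_moment (Ω : Type) [MeasurableSpace Ω]
    (μ : Measure Ω) (hμ : IsProbabilityMeasure μ) (Y : ℕ → Ω → ℕ)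
    (hmeas : ∀ i, Measurable (Y i)) (hpos : ∀ i ω, 1 ≤ Y i ω)
    (hindep : iIndepFun Y μ)
    (hident : ∀ i, MeasureTheory.Measure.map (Y i) μ = MeasureTheory.Measure.map (Y 0) μ)
    (L : ℕ) (hL : 1 ≤ L) (A k : ℝ) (hA : 0 < A) (hk : 0 < k)
    (hkL : 1 ≤ k * Real.sqrt L)
    (hq : A / Real.sqrt L ≤ (μ {ω | L < Y 0 ω}).toReal) :
    (∫ ω, (if k * Real.sqrt L < (renEpochs Y L ω : ℝ)
        then ((renEpochs Y L ω : ℝ)) ^ 2 else 0) ∂μ) ≤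
      2 * Real.exp 1 * (k + 1 / A) ^ 2 * Real.exp (-(A * k)) * L := by
  have hsL : (0:ℝ) < Real.sqrt L := Real.sqrt_pos.2 (by exact_mod_cast Nat.pos_of_ne_zero (by omega))
  have hsqL : Real.sqrt L ^ 2 = (L:ℝ) := Real.sq_sqrt (by positivity)
  set t : ℝ := k * Real.sqrt L with ht_def
  have ht1 : 1 ≤ t := hkL
  have ht0 : 0 ≤ t := by linarith
  set n₀ : ℕ := ⌊t⌋₊ + 1 with hn₀_def
  have htn₀ : t < n₀ := by exact_mod_cast Nat.lt_floor_add_one t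
  have hn₀le : (n₀ : ℝ) ≤ t + 1 := by
    have := Nat.floor_le ht0
    push_cast [hn₀_def]; linarith
  have hn₀1 : 1 ≤ n₀ := by omega
  -- probability quantities
  set qR : ℝ := (μ {ω | L < Y 0 ω}).toReal with hqR_def
  have hqpos : 0 < qR := lt_of_lt_of_le (by positivity) hq
  have hq1 : qR ≤ 1 := by
    rw [hqR_def]
    exact ENNReal.toReal_le_of_le_ofReal one_pos.le (by simpa using prob_le_one)
  set x : ℝ := 1 - qR with hx_def
  clear_value x qR n₀ t
  have hx0 : 0 ≤ x := by linarith
  have hx1 : x < 1 := by linarith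
  -- the measure of {S n ≤ L} is at most x^n
  have hmeasbound : ∀ n : ℕ,
      (μ {ω | ∑ i ∈ Finset.range n, Y i ω ≤ L}).toReal ≤ x ^ n := by
    intro n
    have h1 := aux_indep μ Y hmeas hindep hident L n
    have hcompl : {ω | Y 0 ω ≤ L} = {ω | L < Y 0 ω}ᶜ := by
      ext ω; simp [Set.mem_compl_iff, not_lt]
    have hmsL : MeasurableSet {ω | L < Y 0 ω} := by
      have : {ω | L < Y 0 ω} = (Y 0) ⁻¹' (Set.Ioi L) := rfl
      rw [this]; exact (hmeas 0) measurableSet_Ioi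
    have hp : (μ {ω | Y 0 ω ≤ L}).toReal = x := by
      rw [hcompl, measure_compl hmsL (measure_ne_top μ _), measure_univ,
        ENNReal.toReal_sub_of_le (prob_le_one) (by simp), ENNReal.toReal_one,
        hx_def, hqR_def]
    calc (μ {ω | ∑ i ∈ Finset.range n, Y i ω ≤ L}).toReal
        ≤ ((μ {ω | Y 0 ω ≤ L}) ^ n).toReal := by
          apply ENNReal.toReal_mono _ h1
          exact ENNReal.pow_ne_top (measure_ne_top μ _)
      _ = x ^ n := by rw [ENNReal.toReal_pow, hp]
  -- measurability of the level sets
  have hSmeas : ∀ n : ℕ, MeasurableSet {ω | ∑ i ∈ Finset.range n, Y i ω ≤ L} := by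
    intro n
    have hs : Measurable fun ω => ∑ i ∈ Finset.range n, Y i ω :=
      Finset.measurable_sum _ fun i _ => hmeas i
    have : {ω | ∑ i ∈ Finset.range n, Y i ω ≤ L}
        = (fun ω => ∑ i ∈ Finset.range n, Y i ω) ⁻¹' (Set.Iic L) := rfl
    rw [this]; exact hs measurableSet_Iic
  -- the weight function
  set w : ℕ → ℝ := fun n => if n = n₀ then ((n₀ : ℝ)) ^ 2 else 2 * n - 1 with hw_def
  -- pointwise identity
  have key : ∀ ω, (if t < (renEpochs Y L ω : ℝ) then ((renEpochs Y L ω : ℝ)) ^ 2 else 0)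
      = ∑ n ∈ Finset.Icc n₀ L, w n *
          Set.indicator {ω' | ∑ i ∈ Finset.range n, Y i ω' ≤ L} (fun _ => (1:ℝ)) ω := by
    intro ω
    set N : ℕ := renEpochs Y L ω with hN_def
    have hind : ∀ n ∈ Finset.Icc n₀ L,
        Set.indicator {ω' | ∑ i ∈ Finset.range n, Y i ω' ≤ L} (fun _ => (1:ℝ)) ω
          = if n ≤ N then 1 else 0 := by
      intro n hn
      rw [Finset.mem_Icc] at hn
      rw [Set.indicator_apply]
      congr 1
      simp only [Set.mem_setOf_eq, eq_iff_iff]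
      exact (aux_ge_iff Y hpos L n (by omega) ω).symm
    rcases lt_or_ge t (N : ℝ) with hcase | hcase
    · rw [if_pos hcase]
      have hNn₀ : n₀ ≤ N := by
        have : (⌊t⌋₊ : ℝ) < N := lt_of_le_of_lt (Nat.floor_le ht0) hcase
        have := Nat.cast_lt.mp this
        omega
      have hNL : N ≤ L := aux_le_L Y hpos L ω
      have hsub : Finset.Icc n₀ N ⊆ Finset.Icc n₀ L := Finset.Icc_subset_Icc_right hNL
      have e1 : ∑ n ∈ Finset.Icc n₀ L, w n *
            Set.indicator {ω' | ∑ i ∈ Finset.range n, Y i ω' ≤ L} (fun _ => (1:ℝ)) ω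
          = ∑ n ∈ Finset.Icc n₀ L, w n * (if n ≤ N then (1:ℝ) else 0) :=
        Finset.sum_congr rfl fun n hn => by rw [hind n hn]
      have e2 : ∑ n ∈ Finset.Icc n₀ N, w n * (if n ≤ N then (1:ℝ) else 0)
          = ∑ n ∈ Finset.Icc n₀ L, w n * (if n ≤ N then (1:ℝ) else 0) :=
        Finset.sum_subset hsub (fun n hn hn' => by
          rw [Finset.mem_Icc] at hn hn'
          rw [if_neg (by omega), mul_zero])
      have e3 : ∑ n ∈ Finset.Icc n₀ N, w n * (if n ≤ N then (1:ℝ) else 0)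
          = ∑ n ∈ Finset.Icc n₀ N, w n :=
        Finset.sum_congr rfl fun n hn => by
          rw [Finset.mem_Icc] at hn
          rw [if_pos hn.2, mul_one]
      have e4 : ∑ n ∈ Finset.Icc n₀ N, w n = (N:ℝ) ^ 2 := by
        simp only [hw_def]; exact aux_sum_w n₀ N hNn₀
      rw [e1, ← e2, e3, e4]
    · rw [if_neg (not_lt.2 hcase)]
      rw [Finset.sum_congr rfl fun n hn => by rw [hind n hn]]
      have : ∀ n ∈ Finset.Icc n₀ L, w n * (if n ≤ N then (1:ℝ) else 0) = 0 := by
        intro n hn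
        rw [Finset.mem_Icc] at hn
        have hNlt : N < n₀ := by
          have : (N : ℝ) ≤ t := hcase
          have := Nat.le_floor this
          omega
        rw [if_neg (by omega), mul_zero]
      rw [Finset.sum_congr rfl this, Finset.sum_const_zero]
  -- compute the integral
  have hint : (∫ ω, (if t < (renEpochs Y L ω : ℝ)
        then ((renEpochs Y L ω : ℝ)) ^ 2 else 0) ∂μ)
      = ∑ n ∈ Finset.Icc n₀ L,
          w n * (μ {ω | ∑ i ∈ Finset.range n, Y i ω ≤ L}).toReal := by
    rw [integral_congr_ae (Filter.Eventually.of_forall key)]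
    rw [integral_finset_sum _ (fun n _ => by
      exact ((integrable_const (1:ℝ)).indicator (hSmeas n)).const_mul (w n))]
    refine Finset.sum_congr rfl fun n _ => ?_
    rw [integral_const_mul, integral_indicator_const _ (hSmeas n), smul_eq_mul, mul_one, measureReal_def]
  rw [hint]
  -- pass to x^n
  have hw_nonneg : ∀ n ∈ Finset.Icc n₀ L, 0 ≤ w n := by
    intro n hn
    rw [Finset.mem_Icc] at hn
    by_cases h : n = n₀
    · simp only [hw_def, if_pos h]; positivity
    · simp only [hw_def, if_neg h]
      have : 1 ≤ n := by omega
      have : (1:ℝ) ≤ (n:ℝ) := by exact_mod_cast this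
      linarith
  have step1 : ∑ n ∈ Finset.Icc n₀ L,
        w n * (μ {ω | ∑ i ∈ Finset.range n, Y i ω ≤ L}).toReal
      ≤ ∑ n ∈ Finset.Icc n₀ L, w n * x ^ n :=
    Finset.sum_le_sum fun n hn =>
      mul_le_mul_of_nonneg_left (hmeasbound n) (hw_nonneg n hn)
  refine le_trans step1 ?_
  -- split the weight
  have hwsplit : ∀ n : ℕ, w n = (if n = n₀ then ((n₀:ℝ) - 1) ^ 2 else 0) + (2 * n - 1) := by
    intro n
    simp only [hw_def]
    rcases eq_or_ne n n₀ with h | h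
    · rw [if_pos h, if_pos h, h]; ring
    · rw [if_neg h, if_neg h]; ring
  have hsplit : ∑ n ∈ Finset.Icc n₀ L, w n * x ^ n
      = (∑ n ∈ Finset.Icc n₀ L, (if n = n₀ then ((n₀:ℝ) - 1) ^ 2 * x ^ n else 0))
        + ∑ n ∈ Finset.Icc n₀ L, (2 * (n:ℝ) - 1) * x ^ n := by
    rw [← Finset.sum_add_distrib]
    refine Finset.sum_congr rfl fun n _ => ?_
    rw [hwsplit n, add_mul, ite_mul, zero_mul]
  rw [hsplit]
  -- first piece
  have hfirst : (∑ n ∈ Finset.Icc n₀ L, (if n = n₀ then ((n₀:ℝ) - 1) ^ 2 * x ^ n else 0))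
      ≤ ((n₀:ℝ) - 1) ^ 2 * x ^ n₀ := by
    rw [Finset.sum_ite_eq' (Finset.Icc n₀ L) n₀ (fun n => ((n₀:ℝ) - 1) ^ 2 * x ^ n)]
    by_cases h : n₀ ∈ Finset.Icc n₀ L
    · rw [if_pos h]
    · rw [if_neg h]; positivity
  -- second piece
  have hgeom : ∀ M : ℕ, ∑ j ∈ Finset.range M, x ^ j ≤ qR⁻¹ := by
    intro M
    have hs : Summable fun j : ℕ => x ^ j := summable_geometric_of_lt_one hx0 hx1
    calc ∑ j ∈ Finset.range M, x ^ j ≤ ∑' j : ℕ, x ^ j :=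
          Summable.sum_le_tsum _ (fun j _ => by positivity) hs
      _ = (1 - x)⁻¹ := tsum_geometric_of_lt_one hx0 hx1
      _ = qR⁻¹ := by rw [hx_def]; ring_nf
  have hgeom2 : ∀ M : ℕ, ∑ j ∈ Finset.range M, (j:ℝ) * x ^ j ≤ qR⁻¹ ^ 2 := by
    intro M
    have hnorm : ‖x‖ < 1 := by rw [Real.norm_eq_abs, abs_of_nonneg hx0]; exact hx1
    have hs : Summable fun j : ℕ => (j:ℝ) * x ^ j := by
      have := summable_pow_mul_geometric_of_norm_lt_one (R := ℝ) 1 hnorm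
      simpa using this
    calc ∑ j ∈ Finset.range M, (j:ℝ) * x ^ j ≤ ∑' j : ℕ, (j:ℝ) * x ^ j :=
          Summable.sum_le_tsum _ (fun j _ => by positivity) hs
      _ = x / (1 - x) ^ 2 := tsum_coe_mul_geometric_of_norm_lt_one hnorm
      _ = x / qR ^ 2 := by rw [show (1:ℝ) - x = qR by rw [hx_def]; ring]
      _ ≤ 1 / qR ^ 2 := by
          have hx1' : x ≤ 1 := by linarith
          gcongr
      _ = qR⁻¹ ^ 2 := by rw [one_div, inv_pow]
  have hsecond : ∑ n ∈ Finset.Icc n₀ L, (2 * (n:ℝ) - 1) * x ^ n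
      ≤ 2 * (x ^ n₀ * ((n₀:ℝ) * qR⁻¹ + qR⁻¹ ^ 2)) := by
    have s1 : ∑ n ∈ Finset.Icc n₀ L, (2 * (n:ℝ) - 1) * x ^ n
        ≤ ∑ n ∈ Finset.Icc n₀ L, 2 * (n:ℝ) * x ^ n :=
      Finset.sum_le_sum fun n hn => by
        have hxn : (0:ℝ) ≤ x ^ n := by positivity
        nlinarith
    refine s1.trans ?_
    have s2 : ∑ n ∈ Finset.Icc n₀ L, 2 * (n:ℝ) * x ^ n
        = 2 * ∑ n ∈ Finset.Icc n₀ L, (n:ℝ) * x ^ n := by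
      rw [Finset.mul_sum]
      exact Finset.sum_congr rfl fun n _ => by ring
    rw [s2]
    have s3 : ∑ n ∈ Finset.Icc n₀ L, (n:ℝ) * x ^ n
        = ∑ j ∈ Finset.range (L + 1 - n₀), ((n₀ + j : ℕ):ℝ) * x ^ (n₀ + j) := by
      rw [← Finset.Ico_add_one_right_eq_Icc, Finset.sum_Ico_eq_sum_range]
    rw [s3]
    have s4 : ∑ j ∈ Finset.range (L + 1 - n₀), ((n₀ + j : ℕ):ℝ) * x ^ (n₀ + j)
        = x ^ n₀ * ((n₀:ℝ) * ∑ j ∈ Finset.range (L + 1 - n₀), x ^ j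
            + ∑ j ∈ Finset.range (L + 1 - n₀), (j:ℝ) * x ^ j) := by
      calc ∑ j ∈ Finset.range (L + 1 - n₀), ((n₀ + j : ℕ):ℝ) * x ^ (n₀ + j)
          = ∑ j ∈ Finset.range (L + 1 - n₀), x ^ n₀ * ((n₀:ℝ) * x ^ j + (j:ℝ) * x ^ j) := by
            refine Finset.sum_congr rfl fun j _ => ?_
            push_cast
            rw [pow_add]
            ring
        _ = x ^ n₀ * ∑ j ∈ Finset.range (L + 1 - n₀), ((n₀:ℝ) * x ^ j + (j:ℝ) * x ^ j) :=
            (Finset.mul_sum _ _ _).symm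
        _ = x ^ n₀ * ((n₀:ℝ) * ∑ j ∈ Finset.range (L + 1 - n₀), x ^ j
              + ∑ j ∈ Finset.range (L + 1 - n₀), (j:ℝ) * x ^ j) := by
            rw [Finset.sum_add_distrib, Finset.mul_sum]
    rw [s4]
    have hinner : (n₀:ℝ) * ∑ j ∈ Finset.range (L + 1 - n₀), x ^ j
          + ∑ j ∈ Finset.range (L + 1 - n₀), (j:ℝ) * x ^ j
        ≤ (n₀:ℝ) * qR⁻¹ + qR⁻¹ ^ 2 :=
      add_le_add (mul_le_mul_of_nonneg_left (hgeom _) (by positivity)) (hgeom2 _)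
    have hxpow : (0:ℝ) ≤ x ^ n₀ := by positivity
    nlinarith [mul_le_mul_of_nonneg_left hinner hxpow]
  refine le_trans (add_le_add hfirst hsecond) ?_
  -- numerical facts
  set E : ℝ := Real.exp (-(A * k)) with hE_def
  clear_value E
  have hE0 : 0 < E := by rw [hE_def]; exact Real.exp_pos _
  have hxexp : x ≤ Real.exp (-qR) := by
    have := Real.add_one_le_exp (-qR); linarith
  have hB : x ^ n₀ ≤ E := by
    calc x ^ n₀ ≤ (Real.exp (-qR)) ^ n₀ := pow_le_pow_left₀ hx0 hxexp n₀
      _ = Real.exp ((n₀:ℝ) * (-qR)) := (Real.exp_nat_mul (-qR) n₀).symm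
      _ ≤ E := by
          rw [hE_def]
          apply Real.exp_le_exp.2
          have h1 : A * k ≤ qR * t := by
            have h2 : (A / Real.sqrt L) * t ≤ qR * t :=
              mul_le_mul_of_nonneg_right hq (by linarith)
            have h3 : A * k = (A / Real.sqrt L) * t := by
              rw [ht_def]; field_simp
            linarith
          have h2 : qR * t ≤ qR * n₀ := mul_le_mul_of_nonneg_left (le_of_lt htn₀) hqpos.le
          nlinarith
  have hB0 : (0:ℝ) ≤ x ^ n₀ := by positivity
  have hfl : (n₀:ℝ) - 1 ≤ t := by
    have := Nat.floor_le ht0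
    push_cast [hn₀_def]
    linarith
  have hn₀0 : (1:ℝ) ≤ (n₀:ℝ) := by exact_mod_cast hn₀1
  have hqi : qR⁻¹ ≤ Real.sqrt L / A := by
    have h1 : 1 / qR ≤ 1 / (A / Real.sqrt L) :=
      one_div_le_one_div_of_le (by positivity) hq
    rw [one_div_div] at h1
    rw [← one_div]
    exact h1
  have hqi0 : (0:ℝ) ≤ qR⁻¹ := by positivity
  have hsk : Real.sqrt L ≤ k * L := by
    have hkL' : 1 ≤ k * Real.sqrt L := by rw [← ht_def]; exact ht1
    nlinarith [hsqL, hsL, mul_le_mul_of_nonneg_left hkL' hsL.le]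
  have ht2 : t ^ 2 = k ^ 2 * L := by rw [ht_def, mul_pow, hsqL]
  have hLr : (1:ℝ) ≤ (L:ℝ) := by exact_mod_cast hL
  -- piecewise bounds
  have c1 : ((n₀:ℝ) - 1) ^ 2 * x ^ n₀ ≤ (k ^ 2 * L) * E := by
    have h1 : ((n₀:ℝ) - 1) ^ 2 ≤ k ^ 2 * L := by
      have := pow_le_pow_left₀ (by linarith) hfl 2
      linarith [ht2]
    exact mul_le_mul h1 hB hB0 (by positivity)
  have c2 : (n₀:ℝ) * qR⁻¹ ≤ 2 * k * L / A := by
    have h1 : (n₀:ℝ) * qR⁻¹ ≤ (t + 1) * (Real.sqrt L / A) :=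
      mul_le_mul hn₀le hqi hqi0 (by linarith)
    have h2 : (t + 1) * (Real.sqrt L / A) = (k * L + Real.sqrt L) / A := by
      rw [ht_def]
      field_simp
      nlinarith [hsqL]
    have h3 : (k * L + Real.sqrt L) / A ≤ 2 * k * L / A := by
      rw [div_le_div_iff_of_pos_right hA]
      linarith [hsk]
    linarith
  have c3 : qR⁻¹ ^ 2 ≤ (L:ℝ) / A ^ 2 := by
    have := pow_le_pow_left₀ hqi0 hqi 2
    rwa [div_pow, hsqL] at this
  have c4 : 2 * (x ^ n₀ * ((n₀:ℝ) * qR⁻¹ + qR⁻¹ ^ 2))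
      ≤ 2 * (E * (2 * k * L / A + (L:ℝ) / A ^ 2)) := by
    have hinner2 : (n₀:ℝ) * qR⁻¹ + qR⁻¹ ^ 2 ≤ 2 * k * L / A + (L:ℝ) / A ^ 2 :=
      add_le_add c2 c3
    have h1 : x ^ n₀ * ((n₀:ℝ) * qR⁻¹ + qR⁻¹ ^ 2) ≤ E * (2 * k * L / A + (L:ℝ) / A ^ 2) :=
      mul_le_mul hB hinner2 (by positivity) hE0.le
    linarith
  refine le_trans (add_le_add c1 c4) ?_
  have hfinal1 : (k ^ 2 * L) * E + 2 * (E * (2 * k * L / A + (L:ℝ) / A ^ 2))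
      = E * L * (k ^ 2 + 4 * k / A + 2 / A ^ 2) := by ring
  have hfinal2 : k ^ 2 + 4 * k / A + 2 / A ^ 2 ≤ 2 * (k + 1 / A) ^ 2 := by
    have hexpand : 2 * (k + 1 / A) ^ 2 = 2 * k ^ 2 + 4 * k / A + 2 / A ^ 2 := by
      field_simp; ring
    nlinarith [sq_nonneg k]
  have he1 : (1:ℝ) ≤ Real.exp 1 := by
    have := Real.add_one_le_exp (1:ℝ); linarith
  have hfinal3 : E * L * (2 * (k + 1 / A) ^ 2) ≤ 2 * Real.exp 1 * (k + 1 / A) ^ 2 * E * L := by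
    have h1 : E * L * (2 * (k + 1 / A) ^ 2) ≤ E * L * (2 * (k + 1 / A) ^ 2) * Real.exp 1 :=
      le_mul_of_one_le_right (by positivity) he1
    nlinarith
  have h4 : E * L * (k ^ 2 + 4 * k / A + 2 / A ^ 2) ≤ E * L * (2 * (k + 1 / A) ^ 2) :=
    mul_le_mul_of_nonneg_left hfinal2 (by positivity)
  linarith
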